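/- Let (M, Σ, μ) be a measure space, α a measurable space, R : α → ℝ a measurable function admitting a global minimum, with c := the minimal value of R (so R(u) ≥ c for all u, and R(u*) = c for some u*). Let F be a set of measurable functions f : M → α. For a probability measure P on M, define the expected loss of f under P as the Lebesgue integral ∫⁻ ENNReal.ofReal(R(f(x)) − c) dP(x) (valued in [0,∞]), and let S_P denote the set of f ∈ F whose expected loss under P is minimal among all elements of F. Suppose there exists f₀ ∈ F with R(f₀(x)) = c for μ-almost every x. Then for any two probability measures P and Q on M, each mutually absolutely continuous with μ (P ≪ μ, μ ≪ P, Q ≪ μ, μ ≪ Q), one has S_P = S_Q; that is, the set of minimizers is independent of the probability measure. -/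

import Mathlib

/-!
Because the loss is nonnegative and `f₀` has loss zero under every measure equivalent to `μ`,
the minimizers under such a measure `ν` are exactly the elements of `F` of loss zero, i.e. those
with `R ∘ f = c` `ν`-a.e. Equivalent measures have the same null sets, so this condition reads
the same for `P`, `Q` and `μ`.
-/

open MeasureTheory

open scoped ENNReal

theorem Set.sep_forall_le_eq_sep_eq_zero {β : Type*} {F : Set β} {L : β → ℝ≥0∞}
    (h : ∃ f₀ ∈ F, L f₀ = 0) :
    {f ∈ F | ∀ g ∈ F, L f ≤ L g} = {f ∈ F | L f = 0} := by
  obtain ⟨f₀, hf₀F, hf₀⟩ := h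
  refine Set.sep_ext_iff.2 fun f _ => ⟨fun hle => ?_, fun hf g _ => hf ▸ zero_le⟩
  exact le_antisymm (hf₀ ▸ hle f₀ hf₀F) zero_le

theorem MeasureTheory.lintegral_ofReal_sub_eq_zero_iff {M : Type*} [MeasurableSpace M]
    {ν : Measure M} {g : M → ℝ} {c : ℝ} (hg : AEMeasurable g ν) (hc : ∀ᵐ x ∂ν, c ≤ g x) :
    ∫⁻ x, ENNReal.ofReal (g x - c) ∂ν = 0 ↔ ∀ᵐ x ∂ν, g x = c := by
  rw [lintegral_eq_zero_iff' (hg.sub_const c).ennreal_ofReal]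
  refine ⟨fun h => ?_, fun h => ?_⟩
  · filter_upwards [h, hc] with x hx hcx
    rw [Pi.zero_apply, ENNReal.ofReal_eq_zero, sub_nonpos] at hx
    exact le_antisymm hx hcx
  · filter_upwards [h] with x hx
    simp [hx]

theorem MeasureTheory.Measure.ae_eq_of_absolutelyContinuous {M : Type*} [MeasurableSpace M]
    {μ ν : Measure M} (hνμ : ν ≪ μ) (hμν : μ ≪ ν) : ae ν = ae μ :=
  le_antisymm (Measure.ae_le_iff_absolutelyContinuous.2 hνμ)
    (Measure.ae_le_iff_absolutelyContinuous.2 hμν)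

theorem minimizer_set_independent_of_measure_general
    {M α : Type*} [MeasurableSpace M] [MeasurableSpace α]
    (μ : Measure M) (R : α → ℝ) (hR : Measurable R) (c : ℝ)
    (hc : ∀ u : α, c ≤ R u)
    (F : Set (M → α)) (hF : ∀ f ∈ F, Measurable f)
    (hf₀ : ∃ f₀ ∈ F, ∀ᵐ x ∂μ, R (f₀ x) = c)
    (P Q : Measure M)
    (hPμ : P ≪ μ) (hμP : μ ≪ P) (hQμ : Q ≪ μ) (hμQ : μ ≪ Q) :
    {f ∈ F | ∀ g ∈ F,
        ∫⁻ x, ENNReal.ofReal (R (f x) - c) ∂P ≤ ∫⁻ x, ENNReal.ofReal (R (g x) - c) ∂P} =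
    {f ∈ F | ∀ g ∈ F,
        ∫⁻ x, ENNReal.ofReal (R (f x) - c) ∂Q ≤ ∫⁻ x, ENNReal.ofReal (R (g x) - c) ∂Q} := by
  obtain ⟨f₀, hf₀F, hf₀c⟩ := hf₀
  have minimizers_eq (ν : Measure M) (hνμ : ν ≪ μ) (hμν : μ ≪ ν) :
      {f ∈ F | ∀ g ∈ F,
        ∫⁻ x, ENNReal.ofReal (R (f x) - c) ∂ν ≤ ∫⁻ x, ENNReal.ofReal (R (g x) - c) ∂ν} =
      {f ∈ F | ∀ᵐ x ∂μ, R (f x) = c} := by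
    have loss_eq_zero_iff (f) (hf : f ∈ F) :
        ∫⁻ x, ENNReal.ofReal (R (f x) - c) ∂ν = 0 ↔ ∀ᵐ x ∂μ, R (f x) = c := by
      rw [lintegral_ofReal_sub_eq_zero_iff (g := fun x => R (f x))
        (hR.comp (hF f hf)).aemeasurable
        (ae_of_all _ fun x => hc (f x)), Measure.ae_eq_of_absolutelyContinuous hνμ hμν]
    rw [Set.sep_forall_le_eq_sep_eq_zero ⟨f₀, hf₀F, (loss_eq_zero_iff f₀ hf₀F).2 hf₀c⟩]
    exact Set.sep_ext_iff.2 loss_eq_zero_iff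
  rw [minimizers_eq P hPμ hμP, minimizers_eq Q hQμ hμQ]

/-- **admissibility.** Let `R : α → ℝ` be measurable with global minimum
value `c`, `F` a set of measurable functions `M → α`, and suppose some `f₀ ∈ F` satisfies
`R (f₀ x) = c` for `μ`-a.e. `x`.  Then for any two probability measures `P`, `Q` each
mutually absolutely continuous with `μ`, the set of minimizers in `F` of the expected loss
`∫⁻ ENNReal.ofReal (R (f x) - c) ∂P` coincides with that for `Q`. -/
theorem minimizer_set_independent_of_measure
    {M α : Type*} [MeasurableSpace M] [MeasurableSpace α]
    (μ : Measure M) (R : α → ℝ) (hR : Measurable R) (c : ℝ)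
    (hc : ∀ u : α, c ≤ R u) (hmin : ∃ u : α, R u = c)
    (F : Set (M → α)) (hF : ∀ f ∈ F, Measurable f)
    (hf₀ : ∃ f₀ ∈ F, ∀ᵐ x ∂μ, R (f₀ x) = c)
    (P Q : Measure M) [IsProbabilityMeasure P] [IsProbabilityMeasure Q]
    (hPμ : P ≪ μ) (hμP : μ ≪ P) (hQμ : Q ≪ μ) (hμQ : μ ≪ Q) :
    {f ∈ F | ∀ g ∈ F,
        ∫⁻ x, ENNReal.ofReal (R (f x) - c) ∂P ≤ ∫⁻ x, ENNReal.ofReal (R (g x) - c) ∂P} =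
    {f ∈ F | ∀ g ∈ F,
        ∫⁻ x, ENNReal.ofReal (R (f x) - c) ∂Q ≤ ∫⁻ x, ENNReal.ofReal (R (g x) - c) ∂Q} :=
  minimizer_set_independent_of_measure_general μ R hR c hc F hF hf₀ P Q hPμ hμP hQμ hμQ
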